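/- Let m ∈ ℝ, σ > 0, 0 ≤ a < b, Δq > 0. Let φ(x) = exp(−x²/2)/√(2π) and Φ(x) = ∫_{−∞}^x φ(u) du, set α = (a−m)/σ and β = (b−m)/σ, and let f_{N^T}(ε) = φ((ε−m)/σ)/(σ·(Φ(β)−Φ(α))) for ε ∈ [a,b] and 0 otherwise be the truncated Gaussian density. Let g(x) = ∫_a^b f_{N^T}(ε)·(ε/2)·exp(−ε·|x|) dε be the corresponding mixture Laplace density. Then the mechanism is ε₀-differentially private with ε₀ = ln[ ( m + σ·(φ(α) − φ(β))/(Φ(β) − Φ(α)) ) / ( ∫_a^b ε·exp(−ε·Δq)·f_{N^T}(ε) dε ) ]: for every measurable set S ⊆ ℝ and all a₁, a₂ ∈ ℝ with |a₁ − a₂| ≤ Δq, ∫_S g(x − a₁) dx ≤ exp(ε₀) · ∫_S g(x − a₂) dx. -/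

import Mathlib

open MeasureTheory Real

/-!
Write `H t = ∫ ε * exp (-(ε * t)) * f ε`, so that the mixture density is `g x = H |x| / 2`.
`H` is antitone on `[0, ∞)`, and Chebyshev's inequality for the similarly ordered functions
`ε ↦ exp (-(ε * t))`, `ε ↦ exp (-(ε * d))` gives `H t * H d ≤ H 0 * H (t + d)`. Together they show
that `|s₁ - s₂| ≤ Δ` implies `H s₁ * H Δ ≤ H 0 * H s₂`, i.e. the pointwise bound
`g (x - a₁) ≤ H 0 / H Δ * g (x - a₂)`, which integrates over any set. For the truncated Gaussian,
`H 0` is its mean `m + σ (φ α - φ β) / (Φ β - Φ α)` and `H Δq` is the denominator in `ε₀`.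
-/

noncomputable def gaussPdf (x : ℝ) : ℝ := Real.exp (-x ^ 2 / 2) / Real.sqrt (2 * Real.pi)

noncomputable def gaussCdf (x : ℝ) : ℝ := ∫ u in Set.Iic x, gaussPdf u

lemma gaussPdf_pos (x : ℝ) : 0 < gaussPdf x :=
  div_pos (exp_pos _) (sqrt_pos.2 (by positivity))

@[fun_prop]
lemma continuous_gaussPdf : Continuous gaussPdf := by
  unfold gaussPdf; fun_prop

lemma integrable_gaussPdf : Integrable gaussPdf := by
  refine ((integrable_exp_neg_mul_sq (by norm_num : (0 : ℝ) < 1 / 2)).div_const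
    (sqrt (2 * π))).congr (Filter.Eventually.of_forall fun x => ?_)
  unfold gaussPdf; ring_nf

lemma intervalIntegral_gaussPdf (α β : ℝ) :
    ∫ u in α..β, gaussPdf u = gaussCdf β - gaussCdf α :=
  intervalIntegral.integral_Iic_sub_Iic integrable_gaussPdf.integrableOn
    integrable_gaussPdf.integrableOn |>.symm

lemma gaussCdf_strictMono : StrictMono gaussCdf := fun α β h => by
  have := intervalIntegral.intervalIntegral_pos_of_pos_on
    (continuous_gaussPdf.intervalIntegrable α β) (fun x _ => gaussPdf_pos x) h
  rw [intervalIntegral_gaussPdf] at this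
  linarith

lemma hasDerivAt_gaussPdf (x : ℝ) : HasDerivAt gaussPdf (-x * gaussPdf x) x := by
  have h : HasDerivAt (fun y : ℝ => -y ^ 2 / 2) (-x) x := by
    simpa using ((hasDerivAt_pow 2 x).neg.div_const 2).congr_deriv (by ring)
  exact (h.exp.div_const _).congr_deriv (by rw [gaussPdf]; ring)

lemma intervalIntegral_mul_gaussPdf (α β : ℝ) :
    ∫ u in α..β, u * gaussPdf u = gaussPdf α - gaussPdf β := by
  rw [intervalIntegral.integral_eq_sub_of_hasDerivAt (f := -gaussPdf)
    (fun x _ => by simpa using (hasDerivAt_gaussPdf x).neg)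
    (by exact (continuous_id.mul continuous_gaussPdf).intervalIntegrable α β)]
  simp only [Pi.neg_apply]; ring

lemma intervalIntegral_mul_gaussPdf_div {σ : ℝ} (hσ : σ ≠ 0) (m a b : ℝ) :
    ∫ ε in a..b, ε * gaussPdf ((ε - m) / σ) =
      σ * (m * (gaussCdf ((b - m) / σ) - gaussCdf ((a - m) / σ)) +
        σ * (gaussPdf ((a - m) / σ) - gaussPdf ((b - m) / σ))) := by
  calc ∫ ε in a..b, ε * gaussPdf ((ε - m) / σ)
      = ∫ ε in a..b, (fun u => m * gaussPdf u + σ * (u * gaussPdf u)) (ε / σ - m / σ) :=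
        intervalIntegral.integral_congr fun ε _ => by dsimp only; rw [← sub_div]; field_simp; ring
    _ = σ * ∫ u in (a - m) / σ..(b - m) / σ, (m * gaussPdf u + σ * (u * gaussPdf u)) := by
        simpa only [sub_div, smul_eq_mul] using intervalIntegral.integral_comp_div_sub
          (fun u => m * gaussPdf u + σ * (u * gaussPdf u)) hσ (m / σ)
    _ = _ := by
        rw [intervalIntegral.integral_add (Continuous.intervalIntegrable (by fun_prop) _ _)
          (Continuous.intervalIntegrable (by fun_prop) _ _),
          intervalIntegral.integral_const_mul, intervalIntegral.integral_const_mul,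
          intervalIntegral_gaussPdf, intervalIntegral_mul_gaussPdf]

section TruncatedGaussian

noncomputable def truncGaussPdf (m σ a b ε : ℝ) : ℝ :=
  if ε ∈ Set.Icc a b then
    gaussPdf ((ε - m) / σ) / (σ * (gaussCdf ((b - m) / σ) - gaussCdf ((a - m) / σ)))
  else 0

variable {m σ a b : ℝ}

lemma truncGaussPdf_nonneg (hσ : 0 < σ) (ε : ℝ) : 0 ≤ truncGaussPdf m σ a b ε := by
  unfold truncGaussPdf
  split_ifs with h
  · have hZ : gaussCdf ((a - m) / σ) ≤ gaussCdf ((b - m) / σ) :=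
      gaussCdf_strictMono.monotone (by gcongr; exact h.1.trans h.2)
    exact div_nonneg (gaussPdf_pos _).le (mul_nonneg hσ.le (sub_nonneg.2 hZ))
  · exact le_rfl

lemma truncGaussPdf_pos (hσ : 0 < σ) {ε : ℝ} (h : ε ∈ Set.Ioo a b) :
    0 < truncGaussPdf m σ a b ε := by
  have hZ : gaussCdf ((a - m) / σ) < gaussCdf ((b - m) / σ) :=
    gaussCdf_strictMono (by gcongr; exact h.1.trans h.2)
  rw [truncGaussPdf, if_pos (Set.Ioo_subset_Icc_self h)]
  exact div_pos (gaussPdf_pos _) (mul_pos hσ (sub_pos.2 hZ))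

@[fun_prop]
lemma measurable_truncGaussPdf : Measurable (truncGaussPdf m σ a b) :=
  Measurable.ite measurableSet_Icc (by fun_prop) measurable_const

lemma integrableOn_mul_truncGaussPdf :
    IntegrableOn (fun ε => ε * truncGaussPdf m σ a b ε) (Set.Icc a b) := by
  refine ContinuousOn.integrableOn_compact isCompact_Icc (ContinuousOn.congr
    (f := fun ε => ε * (gaussPdf ((ε - m) / σ) /
      (σ * (gaussCdf ((b - m) / σ) - gaussCdf ((a - m) / σ))))) (by fun_prop) fun ε hε => ?_)
  simp only [truncGaussPdf, if_pos hε]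

lemma setIntegral_mul_truncGaussPdf (hσ : 0 < σ) (hab : a < b) :
    ∫ ε in Set.Icc a b, ε * truncGaussPdf m σ a b ε =
      m + σ * (gaussPdf ((a - m) / σ) - gaussPdf ((b - m) / σ)) /
        (gaussCdf ((b - m) / σ) - gaussCdf ((a - m) / σ)) := by
  have hZ : 0 < gaussCdf ((b - m) / σ) - gaussCdf ((a - m) / σ) :=
    sub_pos.2 (gaussCdf_strictMono (by gcongr))
  calc ∫ ε in Set.Icc a b, ε * truncGaussPdf m σ a b ε
      = ∫ ε in a..b, ε * gaussPdf ((ε - m) / σ) /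
          (σ * (gaussCdf ((b - m) / σ) - gaussCdf ((a - m) / σ))) := by
        rw [intervalIntegral.integral_of_le hab.le, ← integral_Icc_eq_integral_Ioc]
        refine setIntegral_congr_fun measurableSet_Icc fun ε hε => ?_
        simp only [truncGaussPdf, if_pos hε, mul_div_assoc]
    _ = _ := by
        rw [intervalIntegral.integral_div, intervalIntegral_mul_gaussPdf_div hσ.ne']
        field_simp

lemma setIntegral_mul_truncGaussPdf_pos (hσ : 0 < σ) (ha : 0 ≤ a) (hab : a < b) :
    0 < ∫ ε in Set.Icc a b, ε * truncGaussPdf m σ a b ε := by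
  rw [integral_Icc_eq_integral_Ioc, ← intervalIntegral.integral_of_le hab.le]
  refine intervalIntegral.intervalIntegral_pos_of_pos_on ?_
    (fun ε hε => mul_pos (ha.trans_lt hε.1) (truncGaussPdf_pos hσ hε)) hab
  exact (intervalIntegrable_iff_integrableOn_Icc_of_le hab.le).2 integrableOn_mul_truncGaussPdf

end TruncatedGaussian

lemma exp_neg_mul_rearrangement {t d : ℝ} (ht : 0 ≤ t) (hd : 0 ≤ d) (x y : ℝ) :
    exp (-(x * t)) * exp (-(y * d)) + exp (-(y * t)) * exp (-(x * d)) ≤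
      exp (-(x * (t + d))) + exp (-(y * (t + d))) := by
  have hanti : ∀ s, 0 ≤ s → Antitone fun z : ℝ => exp (-(z * s)) := fun s hs z z' hz =>
    exp_le_exp.2 (by nlinarith)
  simpa only [← exp_add, mul_add, neg_add] using
    ((hanti t ht).monovary (hanti d hd)).mul_add_mul_le_mul_add_mul x y

lemma integral_le_mul_integral_of_le_mul {α : Type*} [MeasurableSpace α] {μ : Measure α}
    {f g : α → ℝ} {K : ℝ} (hf : 0 ≤ᵐ[μ] f) (hg : 0 ≤ᵐ[μ] g) (hgm : AEStronglyMeasurable g μ)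
    (hfg : ∀ᵐ x ∂μ, f x ≤ K * g x) (hgf : ∀ᵐ x ∂μ, g x ≤ K * f x) :
    ∫ x, f x ∂μ ≤ K * ∫ x, g x ∂μ := by
  by_cases hgi : Integrable g μ
  · rw [← integral_const_mul]
    exact integral_mono_of_nonneg hf (hgi.const_mul K) hfg
  · -- `g` is dominated by `K * f`, so `f` is not integrable either and both integrals vanish
    have hfi : ¬ Integrable f μ := fun hfi => hgi <| (hfi.const_mul K).mono' hgm <| by
      filter_upwards [hg, hgf] with x hgx hgfx
      rwa [norm_of_nonneg hgx]
    rw [integral_undef hfi, integral_undef hgi, mul_zero]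

noncomputable def firstMomentLaplace (μ : Measure ℝ) (f : ℝ → ℝ) (t : ℝ) : ℝ :=
  ∫ ε, ε * exp (-(ε * t)) * f ε ∂μ

section FirstMomentLaplace

variable {μ : Measure ℝ} {f : ℝ → ℝ}

lemma integrable_firstMomentLaplace_integrand (hf : Integrable (fun ε => ε * f ε) μ)
    (hμ : ∀ᵐ ε ∂μ, 0 ≤ ε) {t : ℝ} (ht : 0 ≤ t) :
    Integrable (fun ε => ε * exp (-(ε * t)) * f ε) μ := by
  have h := hf.bdd_mul (c := 1) (f := fun ε => exp (-(ε * t))) (by fun_prop) <| by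
    filter_upwards [hμ] with ε hε
    rw [norm_of_nonneg (exp_pos _).le, exp_le_one_iff]
    nlinarith
  exact h.congr (ae_of_all _ fun ε => by ring)

lemma firstMomentLaplace_integrand_nonneg_ae (hf0 : 0 ≤ᵐ[μ] f) (hμ : ∀ᵐ ε ∂μ, 0 ≤ ε)
    (t : ℝ) : 0 ≤ᵐ[μ] fun ε => ε * exp (-(ε * t)) * f ε := by
  filter_upwards [hf0, hμ] with ε hfε hε
  exact mul_nonneg (mul_nonneg hε (exp_pos _).le) hfε

lemma firstMomentLaplace_nonneg (hf0 : 0 ≤ᵐ[μ] f) (hμ : ∀ᵐ ε ∂μ, 0 ≤ ε) (t : ℝ) :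
    0 ≤ firstMomentLaplace μ f t :=
  integral_nonneg_of_ae (firstMomentLaplace_integrand_nonneg_ae hf0 hμ t)

lemma antitoneOn_firstMomentLaplace (hf : Integrable (fun ε => ε * f ε) μ) (hf0 : 0 ≤ᵐ[μ] f)
    (hμ : ∀ᵐ ε ∂μ, 0 ≤ ε) : AntitoneOn (firstMomentLaplace μ f) (Set.Ici 0) := by
  intro t ht t' ht' htt'
  refine integral_mono_ae (integrable_firstMomentLaplace_integrand hf hμ ht')
    (integrable_firstMomentLaplace_integrand hf hμ ht) ?_
  filter_upwards [hf0, hμ] with ε hfε hε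
  gcongr ε * exp ?_ * f ε
  nlinarith

lemma firstMomentLaplace_pos (hf : Integrable (fun ε => ε * f ε) μ) (hf0 : 0 ≤ᵐ[μ] f)
    (hμ : ∀ᵐ ε ∂μ, 0 ≤ ε) (h0 : 0 < firstMomentLaplace μ f 0) {t : ℝ} (ht : 0 ≤ t) :
    0 < firstMomentLaplace μ f t := by
  have hsupp : ∀ s, Function.support (fun ε => ε * exp (-(ε * s)) * f ε) =
      Function.support fun ε => ε * f ε := fun s => by
    ext ε; simp [exp_ne_zero]
  rw [firstMomentLaplace, integral_pos_iff_support_of_nonneg_ae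
    (firstMomentLaplace_integrand_nonneg_ae hf0 hμ 0)
    (integrable_firstMomentLaplace_integrand hf hμ le_rfl)] at h0
  rw [firstMomentLaplace, integral_pos_iff_support_of_nonneg_ae
    (firstMomentLaplace_integrand_nonneg_ae hf0 hμ t)
    (integrable_firstMomentLaplace_integrand hf hμ ht)]
  rwa [hsupp] at h0 ⊢

lemma firstMomentLaplace_mul_le [SFinite μ] (hf : Integrable (fun ε => ε * f ε) μ)
    (hf0 : 0 ≤ᵐ[μ] f) (hμ : ∀ᵐ ε ∂μ, 0 ≤ ε) {t d : ℝ} (ht : 0 ≤ t) (hd : 0 ≤ d) :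
    firstMomentLaplace μ f t * firstMomentLaplace μ f d ≤
      firstMomentLaplace μ f 0 * firstMomentLaplace μ f (t + d) := by
  set u : ℝ → ℝ → ℝ := fun s ε => ε * exp (-(ε * s)) * f ε
  have hprod : ∀ s s', 0 ≤ s → 0 ≤ s' →
      Integrable (fun z : ℝ × ℝ => u s z.1 * u s' z.2) (μ.prod μ) := fun s s' hs hs' =>
    (integrable_firstMomentLaplace_integrand hf hμ hs).mul_prod
      (integrable_firstMomentLaplace_integrand hf hμ hs')
  have htd := add_nonneg ht hd
  -- Chebyshev's integral inequality, symmetrized over `μ.prod μ`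
  have key : ∫ z, (u t z.1 * u d z.2 + u d z.1 * u t z.2) ∂μ.prod μ ≤
      ∫ z, (u 0 z.1 * u (t + d) z.2 + u (t + d) z.1 * u 0 z.2) ∂μ.prod μ := by
    refine integral_mono_ae ((hprod _ _ ht hd).add (hprod _ _ hd ht))
      ((hprod _ _ le_rfl htd).add (hprod _ _ htd le_rfl)) ?_
    filter_upwards [Measure.quasiMeasurePreserving_fst.ae (hf0.and hμ),
      Measure.quasiMeasurePreserving_snd.ae (hf0.and hμ)] with z ⟨hfx, hx⟩ ⟨hfy, hy⟩
    have hw : 0 ≤ z.1 * f z.1 * (z.2 * f z.2) :=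
      mul_nonneg (mul_nonneg hx hfx) (mul_nonneg hy hfy)
    have := mul_le_mul_of_nonneg_left (exp_neg_mul_rearrangement ht hd z.1 z.2) hw
    simp only [u, mul_zero, neg_zero, exp_zero]
    linear_combination this
  rw [integral_add (hprod _ _ ht hd) (hprod _ _ hd ht),
    integral_add (hprod _ _ le_rfl htd) (hprod _ _ htd le_rfl),
    integral_prod_mul, integral_prod_mul, integral_prod_mul, integral_prod_mul] at key
  change firstMomentLaplace μ f t * firstMomentLaplace μ f d +
      firstMomentLaplace μ f d * firstMomentLaplace μ f t ≤
    firstMomentLaplace μ f 0 * firstMomentLaplace μ f (t + d) +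
      firstMomentLaplace μ f (t + d) * firstMomentLaplace μ f 0 at key
  linarith

lemma firstMomentLaplace_mul_le_of_abs_sub_le [SFinite μ]
    (hf : Integrable (fun ε => ε * f ε) μ) (hf0 : 0 ≤ᵐ[μ] f) (hμ : ∀ᵐ ε ∂μ, 0 ≤ ε)
    {s₁ s₂ Δ : ℝ} (hs₁ : 0 ≤ s₁) (hs₂ : 0 ≤ s₂) (hΔ : 0 ≤ Δ) (h : |s₁ - s₂| ≤ Δ) :
    firstMomentLaplace μ f s₁ * firstMomentLaplace μ f Δ ≤
      firstMomentLaplace μ f 0 * firstMomentLaplace μ f s₂ := by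
  have hanti := antitoneOn_firstMomentLaplace hf hf0 hμ
  have hnonneg := firstMomentLaplace_nonneg hf0 hμ
  obtain ⟨h₁, h₂⟩ := abs_le.1 h
  rcases le_total s₂ Δ with hs₂Δ | hΔs₂
  · exact mul_le_mul (hanti (Set.mem_Ici.2 le_rfl) hs₁ hs₁) (hanti hs₂ hΔ hs₂Δ)
      (hnonneg Δ) (hnonneg 0)
  · calc firstMomentLaplace μ f s₁ * firstMomentLaplace μ f Δ
        ≤ firstMomentLaplace μ f (s₂ - Δ) * firstMomentLaplace μ f Δ :=
          mul_le_mul_of_nonneg_right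
            (hanti (sub_nonneg.2 hΔs₂) hs₁ (by linarith)) (hnonneg Δ)
      _ ≤ firstMomentLaplace μ f 0 * firstMomentLaplace μ f (s₂ - Δ + Δ) :=
          firstMomentLaplace_mul_le hf hf0 hμ (sub_nonneg.2 hΔs₂) hΔ
      _ = firstMomentLaplace μ f 0 * firstMomentLaplace μ f s₂ := by rw [sub_add_cancel]

lemma measurable_firstMomentLaplace [SFinite μ] (hf : Measurable f) :
    Measurable (firstMomentLaplace μ f) :=
  (Measurable.stronglyMeasurable (f := fun p : ℝ × ℝ => p.2 * exp (-(p.2 * p.1)) * f p.2)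
    (by fun_prop)).integral_prod_right'.measurable

lemma integral_mixtureLaplace (μ : Measure ℝ) (f : ℝ → ℝ) (x : ℝ) :
    ∫ ε, f ε * (ε / 2 * exp (-(ε * |x|))) ∂μ = firstMomentLaplace μ f |x| / 2 := by
  rw [firstMomentLaplace, ← integral_div]
  congr 1 with ε
  ring

theorem setIntegral_mixtureLaplace_le [SFinite μ] (hfm : Measurable f)
    (hf : Integrable (fun ε => ε * f ε) μ) (hf0 : 0 ≤ᵐ[μ] f) (hμ : ∀ᵐ ε ∂μ, 0 ≤ ε) {Δ : ℝ}
    (hΔ : 0 ≤ Δ) (h0 : 0 < firstMomentLaplace μ f 0) (S : Set ℝ) {a₁ a₂ : ℝ}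
    (ha : |a₁ - a₂| ≤ Δ) :
    ∫ x in S, ∫ ε, f ε * (ε / 2 * exp (-(ε * |x - a₁|))) ∂μ ≤
      firstMomentLaplace μ f 0 / firstMomentLaplace μ f Δ *
        ∫ x in S, ∫ ε, f ε * (ε / 2 * exp (-(ε * |x - a₂|))) ∂μ := by
  have hΔpos := firstMomentLaplace_pos hf hf0 hμ h0 hΔ
  have hpt : ∀ {c₁ c₂ : ℝ} (x : ℝ), |c₁ - c₂| ≤ Δ →
      firstMomentLaplace μ f |x - c₁| / 2 ≤
        firstMomentLaplace μ f 0 / firstMomentLaplace μ f Δ *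
          (firstMomentLaplace μ f |x - c₂| / 2) := by
    intro c₁ c₂ x hc
    have habs : |(|x - c₁| - |x - c₂|)| ≤ Δ := (abs_abs_sub_abs_le_abs_sub _ _).trans
      (by rwa [sub_sub_sub_cancel_left, abs_sub_comm])
    have := firstMomentLaplace_mul_le_of_abs_sub_le hf hf0 hμ (abs_nonneg _) (abs_nonneg _) hΔ habs
    rw [div_mul_eq_mul_div, le_div_iff₀ hΔpos]
    linear_combination this / 2
  simp only [integral_mixtureLaplace]
  exact integral_le_mul_integral_of_le_mul
    (ae_of_all _ fun x => div_nonneg (firstMomentLaplace_nonneg hf0 hμ _) zero_le_two)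
    (ae_of_all _ fun x => div_nonneg (firstMomentLaplace_nonneg hf0 hμ _) zero_le_two)
    (((measurable_firstMomentLaplace hfm).comp (by fun_prop)).div_const 2).aestronglyMeasurable
    (ae_of_all _ fun x => hpt x ha) (ae_of_all _ fun x => hpt x (by rwa [abs_sub_comm]))

end FirstMomentLaplace

/-- The Randomized DP Laplace mechanism whose reciprocal scale is distributed according
to the Gaussian `N(m, σ²)` truncated to `[a, b]` satisfies `ε₀`-differential privacy with
`ε₀ = ln[ (m + σ(φ(α) − φ(β))/(Φ(β) − Φ(α))) / M′_{N^T}(−Δq) ]`, where `α = (a−m)/σ`,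
`β = (b−m)/σ`, and `M′_{N^T}(−Δq) = ∫ ε·exp(−εΔq)·f_{N^T}(ε) dε`. -/
theorem truncated_gaussian_mixture_laplace_dp
    (m σ a b Δq : ℝ) (hσ : 0 < σ) (ha : 0 ≤ a) (hab : a < b) (hΔq : 0 < Δq)
    (α β : ℝ) (hα : α = (a - m) / σ) (hβ : β = (b - m) / σ)
    (fNT : ℝ → ℝ)
    (hfNT : ∀ ε : ℝ, fNT ε = if ε ∈ Set.Icc a b then
      gaussPdf ((ε - m) / σ) / (σ * (gaussCdf β - gaussCdf α)) else 0)
    (g : ℝ → ℝ)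
    (hg : ∀ x : ℝ, g x = ∫ ε in Set.Icc a b, fNT ε * ((ε / 2) * Real.exp (-(ε * |x|))))
    (ε₀ : ℝ)
    (hε₀ : ε₀ = Real.log ((m + σ * (gaussPdf α - gaussPdf β) / (gaussCdf β - gaussCdf α)) /
      (∫ ε in Set.Icc a b, ε * Real.exp (-(ε * Δq)) * fNT ε))) :
    ∀ S : Set ℝ, MeasurableSet S → ∀ a₁ a₂ : ℝ, |a₁ - a₂| ≤ Δq →
      ∫ x in S, g (x - a₁) ≤ Real.exp ε₀ * ∫ x in S, g (x - a₂) := by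
  intro S _ a₁ a₂ hdist
  subst hα hβ
  obtain rfl : fNT = truncGaussPdf m σ a b := funext hfNT
  have hf : Integrable (fun ε => ε * truncGaussPdf m σ a b ε) (volume.restrict (Set.Icc a b)) :=
    integrableOn_mul_truncGaussPdf
  have hf0 : 0 ≤ᵐ[volume.restrict (Set.Icc a b)] truncGaussPdf m σ a b :=
    ae_of_all _ (truncGaussPdf_nonneg hσ)
  have hμ : ∀ᵐ ε ∂volume.restrict (Set.Icc a b), 0 ≤ ε :=
    ae_restrict_of_forall_mem measurableSet_Icc fun ε hε => ha.trans hε.1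
  set H := firstMomentLaplace (volume.restrict (Set.Icc a b)) (truncGaussPdf m σ a b)
  have hmean : H 0 = ∫ ε in Set.Icc a b, ε * truncGaussPdf m σ a b ε := by
    simp [H, firstMomentLaplace]
  have h0 : 0 < H 0 := hmean ▸ setIntegral_mul_truncGaussPdf_pos hσ ha hab
  have hexp : exp ε₀ = H 0 / H Δq := by
    rw [hε₀, ← setIntegral_mul_truncGaussPdf hσ hab, ← hmean]
    exact exp_log (div_pos h0 (firstMomentLaplace_pos hf hf0 hμ h0 hΔq.le))
  simp only [hg, hexp]
  exact setIntegral_mixtureLaplace_le measurable_truncGaussPdf hf hf0 hμ hΔq.le h0 S hdist
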